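/- Let f : [0,∞) → ℝ be continuous, twice continuously differentiable on (0,∞), with f' ≥ 0 and f'' ≤ 0 on (0,2]. Let ε₀ ∈ (0,1]. Then for all x, y, z ∈ ℝ^d with 0 < |x−y| ≤ ε₀ and |z| ≤ 1: f(|x−y+z|) − f(|x−y|) − (f'(|x−y|)/|x−y|) ⟨x−y, z⟩ ≤ (f'(|x−y|)/|x−y|) · |z|²/2. -/

import Mathlib

open Set
open scoped RealInnerProductSpace

/-- let `f : [0,∞) → ℝ` be continuous, `C²` on `(0,∞)` with `f' ≥ 0`,
`f'' ≤ 0` on `(0,2]`, and `ε₀ ∈ (0,1]`. Then for `0 < |x−y| ≤ ε₀` and `|z| ≤ 1`: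
`f(|x−y+z|) − f(|x−y|) − (f'(|x−y|)/|x−y|)⟨x−y, z⟩ ≤ (f'(|x−y|)/|x−y|)|z|²/2`. -/
theorem statement9 {d : ℕ} (f : ℝ → ℝ)
    (hf_cont : ContinuousOn f (Set.Ici 0))
    (hf_smooth : ContDiffOn ℝ 2 f (Set.Ioi 0))
    (hf' : ∀ r : ℝ, 0 < r → r ≤ 2 → 0 ≤ deriv f r)
    (hf'' : ∀ r : ℝ, 0 < r → r ≤ 2 → deriv (deriv f) r ≤ 0)
    (ε₀ : ℝ) (hε₀ : 0 < ε₀) (hε₀1 : ε₀ ≤ 1)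
    (x y z : EuclideanSpace ℝ (Fin d))
    (hxy : 0 < ‖x - y‖) (hxy' : ‖x - y‖ ≤ ε₀) (hz : ‖z‖ ≤ 1) :
    f ‖x - y + z‖ - f ‖x - y‖ - (deriv f ‖x - y‖ / ‖x - y‖) * ⟪x - y, z⟫
      ≤ (deriv f ‖x - y‖ / ‖x - y‖) * (‖z‖ ^ 2 / 2) := by
  set r := ‖x - y‖ with hrdef
  set s := ‖x - y + z‖ with hsdef
  have hr2 : r ≤ 2 := by linarith
  have hs0 : (0 : ℝ) ≤ s := norm_nonneg _
  have hs2 : s ≤ 2 := by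
    have := norm_add_le (x - y) z
    linarith
  have hD0 : 0 ≤ deriv f r := hf' r hxy hr2
  -- differentiability facts
  have hfd : DifferentiableOn ℝ f (Ioo (0:ℝ) 2) :=
    (hf_smooth.differentiableOn (by norm_num)).mono (fun t ht => ht.1)
  have hfd' : DifferentiableOn ℝ (deriv f) (Ioo (0:ℝ) 2) :=
    ((hf_smooth.deriv_of_isOpen isOpen_Ioi (show (1:WithTop ℕ∞) + 1 ≤ 2 by norm_num)).differentiableOn
      one_ne_zero).mono (fun t ht => ht.1)
  have hconc : ConcaveOn ℝ (Icc (0:ℝ) 2) f := by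
    apply concaveOn_of_deriv2_nonpos (convex_Icc 0 2)
      (hf_cont.mono (fun t ht => ht.1))
    · rw [interior_Icc]; exact hfd
    · rw [interior_Icc]; exact hfd'
    · rw [interior_Icc]
      intro t ht
      simpa using hf'' t ht.1 ht.2.le
  have hrIoo : r ∈ Ioo (0:ℝ) 2 := ⟨hxy, by linarith⟩
  have hdiffr : DifferentiableAt ℝ f r :=
    (hfd r hrIoo).differentiableAt (isOpen_Ioo.mem_nhds hrIoo)
  have hrIcc : r ∈ Icc (0:ℝ) 2 := ⟨hxy.le, hr2⟩
  have hsIcc : s ∈ Icc (0:ℝ) 2 := ⟨hs0, hs2⟩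
  -- tangent line inequality
  have key : f s - f r ≤ deriv f r * (s - r) := by
    rcases lt_trichotomy s r with hsr | hsr | hsr
    · have h1 := hconc.deriv_le_slope hsIcc hrIcc hsr hdiffr
      rw [slope_def_field] at h1
      have h2 : 0 < r - s := by linarith
      rw [le_div_iff₀ h2] at h1
      nlinarith
    · simp [hsr]
    · have h1 := hconc.slope_le_deriv hrIcc hsIcc hsr hdiffr
      rw [slope_def_field] at h1
      have h2 : 0 < s - r := by linarith
      rw [div_le_iff₀ h2] at h1
      nlinarith
  have hinner : ⟪x - y, z⟫ = (s ^ 2 - r ^ 2 - ‖z‖ ^ 2) / 2 := by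
    have h := norm_add_sq_real (x - y) z
    rw [← hrdef, ← hsdef] at h
    linarith
  have h2 : deriv f r * (s - r) ≤
      deriv f r / r * ((s ^ 2 - r ^ 2 - ‖z‖ ^ 2) / 2) + deriv f r / r * (‖z‖ ^ 2 / 2) := by
    rw [← mul_add]
    have he : (s ^ 2 - r ^ 2 - ‖z‖ ^ 2) / 2 + ‖z‖ ^ 2 / 2 = (s ^ 2 - r ^ 2) / 2 := by ring
    rw [he, div_mul_eq_mul_div, le_div_iff₀ hxy]
    nlinarith [mul_nonneg hD0 (sq_nonneg (s - r))]
  rw [hinner]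
  linarith
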